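/- The pure homotopy braid group P̂₃, i.e., the subgroup of the homotopy braid group B̂₃ generated by b₁₂, b₁₃, b₂₃, is torsion-free: if g ∈ P̂₃ and gⁿ = 1 for some integer n ≥ 1, then g = 1. -/

import Mathlib

/-!
Modulo the homotopy relations, `z = [b₂₃, b₁₃]` commutes with `b₁₃` and `b₂₃`, and
`b₁₂b₁₃b₂₃ = Δ²` is central, so every element of `P̂₃` is `b₁₃ᵏ b₂₃ˡ zᵈ (b₁₂b₁₃b₂₃)ᵐ`.
The unreduced Burau representation at `t = 1 + ε`, over `ℤ[ε]/(ε³)`, sends pure braids into the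
congruence subgroup `Γ₁ = 1 + ε M₃`. There every `x` commutes with its conjugates `w⁻¹xw`, because
`w⁻¹xw - x ∈ ε² M₃` is killed by `x - 1`; so the representation factors through `B̂₃`.
The `ε`-coefficient of `u - 1` is additive on `Γ₁`, and the `ε²`-coefficient on `Γ₂ = 1 + ε² M₃`.
Hence `Γ₁` is torsion-free, and the same two coefficients recover `k, l, m` and then `d` from the
image of a normal form, so `P̂₃` embeds into `Γ₁`.
-/

/-- The commutator `[x, y] = x⁻¹ y⁻¹ x y` used in the paper. -/
def pcomm {G : Type*} [Group G] (x y : G) : G := x⁻¹ * y⁻¹ * x * y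

/-- The braid relation `σ₁σ₂σ₁ = σ₂σ₁σ₂` on two generators. -/
def braidRel3 : Set (FreeGroup (Fin 2)) :=
  { FreeGroup.of 0 * FreeGroup.of 1 * FreeGroup.of 0 *
      (FreeGroup.of 1 * FreeGroup.of 0 * FreeGroup.of 1)⁻¹ }

/-- The braid group `B₃`. -/
abbrev B3 := PresentedGroup braidRel3

/-- The generator `σ₁` of `B₃`. -/
def s1 : B3 := PresentedGroup.of 0
/-- The generator `σ₂` of `B₃`. -/
def s2 : B3 := PresentedGroup.of 1
/-- `a₁₂ = σ₁²`. -/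
def a12 : B3 := s1 ^ 2
/-- `a₁₃ = σ₂σ₁²σ₂⁻¹`. -/
def a13 : B3 := s2 * s1 ^ 2 * s2⁻¹
/-- `a₂₃ = σ₂²`. -/
def a23 : B3 := s2 ^ 2

/-- The homotopy relations in `B₃`: `[a₁₃, g⁻¹a₁₃g]` and `[a₂₃, g⁻¹a₂₃g]` for `g`
in the subgroup generated by `a₁₃` and `a₂₃`. -/
def homotopyRels3 : Set B3 :=
  { x | ∃ g ∈ Subgroup.closure {a13, a23},
        x = pcomm a13 (g⁻¹ * a13 * g) ∨ x = pcomm a23 (g⁻¹ * a23 * g) }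

/-- The homotopy braid group `B̂₃`. -/
abbrev HB3 := B3 ⧸ Subgroup.normalClosure homotopyRels3

/-- The canonical projection `B₃ → B̂₃`. -/
def pr : B3 →* HB3 := QuotientGroup.mk' _

/-- The image of `σ₁` in `B̂₃`. -/
def t1 : HB3 := pr s1
/-- The image of `σ₂` in `B̂₃`. -/
def t2 : HB3 := pr s2
/-- The image `b₁₂` of `a₁₂` in `B̂₃`. -/
def b12 : HB3 := pr a12
/-- The image `b₁₃` of `a₁₃` in `B̂₃`. -/
def b13 : HB3 := pr a13
/-- The image `b₂₃` of `a₂₃` in `B̂₃`. -/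
def b23 : HB3 := pr a23
/-- `z = [b₂₃, b₁₃]`. -/
def zz : HB3 := pcomm b23 b13

section CongruenceSubgroup

variable {R : Type*} [Ring R]

def congrSubgroup (I : Ideal R) : Subgroup Rˣ where
  carrier := {u | (u : R) - 1 ∈ I}
  one_mem' := by simp
  mul_mem' {u v} hu hv := by
    have : ((u * v : Rˣ) : R) - 1 = u * ((v : R) - 1) + ((u : R) - 1) := by
      push_cast; noncomm_ring
    change _ ∈ I
    simpa only [this] using I.add_mem (I.mul_mem_left _ hv) hu
  inv_mem' {u} hu := by
    have : ((u⁻¹ : Rˣ) : R) - 1 = -(u⁻¹ * ((u : R) - 1)) := by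
      rw [mul_sub, Units.inv_mul, mul_one, neg_sub]
    change _ ∈ I
    simpa only [this] using I.neg_mem (I.mul_mem_left _ hu)

lemma commute_conj_of_mem_congrSubgroup {I : Ideal R}
    (hI : ∀ a ∈ I, ∀ b ∈ I, ∀ c ∈ I, a * b * c = 0) {x w : Rˣ}
    (hx : x ∈ congrSubgroup I) (hw : w ∈ congrSubgroup I) : Commute x (w⁻¹ * x * w) := by
  rw [← Commute.units_val_iff, Units.val_mul, Units.val_mul]
  set X : R := (x : R)
  set W : R := (w : R)
  set V : R := ((w⁻¹ : Rˣ) : R)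
  have hVW : V * W = 1 := Units.inv_mul w
  have hv : V - 1 ∈ I := inv_mem hw
  -- With `a, b, c := X - 1, W - 1, V - 1 ∈ I`, `VXW - X` is both `V (ab - ba)` and `(ca - ac) W`,
  -- so `a` kills it from either side.
  have hright : (V * X * W - X) * (X - 1) = 0 := by
    have : V * X * W - X = V * ((X - 1) * (W - 1) - (W - 1) * (X - 1)) := by
      linear_combination (norm := noncomm_ring) hVW * X
    rw [this, mul_assoc, sub_mul, hI _ hx _ hw _ hx, hI _ hw _ hx _ hx, sub_self, mul_zero]
  have hleft : (X - 1) * (V * X * W - X) = 0 := by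
    have : V * X * W - X = ((V - 1) * (X - 1) - (X - 1) * (V - 1)) * W := by
      linear_combination (norm := noncomm_ring) X * hVW
    rw [this, ← mul_assoc, mul_sub, ← mul_assoc, ← mul_assoc, hI _ hx _ hv _ hx,
      hI _ hx _ hx _ hv, sub_self, zero_mul]
  rw [Commute, SemiconjBy]
  linear_combination (norm := noncomm_ring) hleft - hright

def congrSubgroupHom {A : Type*} [AddCommGroup A] (I : Ideal R) (φ : R →+ A)
    (hφ : ∀ a ∈ I, ∀ b ∈ I, φ (a * b) = 0) : congrSubgroup I →* Multiplicative A where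
  toFun u := .ofAdd (φ (((u : Rˣ) : R) - 1))
  map_one' := by simp
  map_mul' u v := by
    set a : R := ((u : Rˣ) : R) - 1
    set b : R := ((v : Rˣ) : R) - 1
    have : (((u * v : congrSubgroup I) : Rˣ) : R) - 1 = a * b + a + b := by
      push_cast [a, b]; noncomm_ring
    simp only [this, map_add, hφ a u.2 b v.2, zero_add, ofAdd_add]

end CongruenceSubgroup

lemma Ideal.mul_mem_matrix {R : Type*} [Semiring R] {n : Type*} [Fintype n] [DecidableEq n]
    {I J K : Ideal R} (hIJ : ∀ x ∈ I, ∀ y ∈ J, x * y ∈ K) {M N : Matrix n n R}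
    (hM : M ∈ I.matrix n) (hN : N ∈ J.matrix n) : M * N ∈ K.matrix n :=
  fun i j => Ideal.sum_mem _ fun k _ => hIJ _ (hM i k) _ (hN k j)

instance {m n α : Type*} [AddMonoid α] [IsAddTorsionFree α] : IsAddTorsionFree (Matrix m n α) :=
  inferInstanceAs (IsAddTorsionFree (m → n → α))

lemma pcomm_eq_one_iff {G : Type*} [Group G] {x y : G} : pcomm x y = 1 ↔ Commute x y := by
  rw [pcomm, mul_assoc, mul_assoc, inv_mul_eq_one, eq_inv_mul_iff_mul_eq, eq_comm]
  rfl

lemma map_pcomm {G H : Type*} [Group G] [Group H] (f : G →* H) (x y : G) :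
    f (pcomm x y) = pcomm (f x) (f y) := by
  simp only [pcomm, map_mul, map_inv]

section Heisenberg

variable {G : Type*} [Group G] {u v z C : G}

lemma mul_zpow_eq_of_mul_eq (huv : v * u = u * v * z) (hzu : Commute z u) (hzv : Commute z v)
    (k : ℤ) : v * u ^ k = u ^ k * v * z ^ k := by
  have hconj : v * u * v⁻¹ = u * z := by
    rw [huv, mul_assoc u, ← hzv.eq, mul_assoc, mul_inv_cancel_right]
  have : v * u ^ k * v⁻¹ = u ^ k * z ^ k := by
    rw [← conj_zpow, hconj, hzu.symm.mul_zpow]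
  rw [mul_assoc, ← (hzv.zpow_left k).eq, ← mul_assoc, ← this, inv_mul_cancel_right]

lemma zpow_mul_zpow_eq_of_mul_eq (huv : v * u = u * v * z) (hzu : Commute z u)
    (hzv : Commute z v) (k l : ℤ) : v ^ l * u ^ k = u ^ k * v ^ l * z ^ (k * l) := by
  have hconj : (u ^ k)⁻¹ * v * (u ^ k)⁻¹⁻¹ = v * z ^ k := by
    rw [inv_inv, mul_assoc, mul_zpow_eq_of_mul_eq huv hzu hzv, ← mul_assoc, ← mul_assoc,
      inv_mul_cancel, one_mul]
  have : (u ^ k)⁻¹ * v ^ l * u ^ k = v ^ l * z ^ (k * l) := by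
    rw [← inv_inv (u ^ k), inv_inv (u ^ k)⁻¹, ← conj_zpow, hconj,
      (hzv.zpow_left k).symm.mul_zpow, zpow_mul]
  rw [mul_assoc, ← this]
  simp only [mul_assoc, mul_inv_cancel_left]

lemma heisenberg_mul (huv : v * u = u * v * z) (hzu : Commute z u) (hzv : Commute z v)
    (k l d k' l' d' : ℤ) :
    u ^ k * v ^ l * z ^ d * (u ^ k' * v ^ l' * z ^ d') =
      u ^ (k + k') * v ^ (l + l') * z ^ (d + d' + k' * l) := by
  have hz : Commute (z ^ d) (u ^ k' * v ^ l') :=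
    (hzu.zpow_zpow d k').mul_right (hzv.zpow_zpow d l')
  calc u ^ k * v ^ l * z ^ d * (u ^ k' * v ^ l' * z ^ d')
      = u ^ k * (v ^ l * u ^ k') * v ^ l' * (z ^ d * z ^ d') := by
        rw [← mul_assoc, mul_assoc _ (z ^ d), hz.eq]; simp only [mul_assoc]
    _ = u ^ k * u ^ k' * v ^ l * (z ^ (k' * l) * v ^ l') * (z ^ d * z ^ d') := by
        rw [zpow_mul_zpow_eq_of_mul_eq huv hzu hzv]; simp only [mul_assoc]
    _ = u ^ (k + k') * v ^ (l + l') * z ^ (k' * l + (d + d')) := by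
        rw [(hzv.zpow_zpow _ l').eq, zpow_add u, zpow_add v, zpow_add z, zpow_add z d]
        simp only [mul_assoc]
    _ = u ^ (k + k') * v ^ (l + l') * z ^ (d + d' + k' * l) := by rw [add_comm (k' * l)]

lemma heisenberg_inv (huv : v * u = u * v * z) (hzu : Commute z u) (hzv : Commute z v)
    (k l d : ℤ) : (u ^ k * v ^ l * z ^ d)⁻¹ = u ^ (-k) * v ^ (-l) * z ^ (k * l - d) := by
  refine inv_eq_of_mul_eq_one_right ?_
  rw [heisenberg_mul huv hzu hzv, show d + (k * l - d) + -k * l = 0 by ring]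
  simp

lemma exists_eq_heisenberg_mul_zpow_of_mem_closure (huv : v * u = u * v * z)
    (hzu : Commute z u) (hzv : Commute z v) (hCu : Commute C u) (hCv : Commute C v)
    (hCz : Commute C z) {x : G} (hx : x ∈ Subgroup.closure {u, v, C}) :
    ∃ k l d m : ℤ, x = u ^ k * v ^ l * z ^ d * C ^ m := by
  have hC (k l d : ℤ) : Commute C (u ^ k * v ^ l * z ^ d) :=
    ((hCu.zpow_right k).mul_right (hCv.zpow_right l)).mul_right (hCz.zpow_right d)
  induction hx using Subgroup.closure_induction with
  | mem x hx =>
    rcases hx with rfl | rfl | rfl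
    exacts [⟨1, 0, 0, 0, by simp⟩, ⟨0, 1, 0, 0, by simp⟩, ⟨0, 0, 0, 1, by simp⟩]
  | one => exact ⟨0, 0, 0, 0, by simp⟩
  | mul x y _ _ hx hy =>
    obtain ⟨k, l, d, m, rfl⟩ := hx
    obtain ⟨k', l', d', m', rfl⟩ := hy
    refine ⟨k + k', l + l', d + d' + k' * l, m + m', ?_⟩
    rw [← heisenberg_mul huv hzu hzv, zpow_add, mul_assoc _ (C ^ m), ← mul_assoc (C ^ m),
      ((hC k' l' d').zpow_left m).eq]
    simp only [mul_assoc]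
  | inv x _ hx =>
    obtain ⟨k, l, d, m, rfl⟩ := hx
    refine ⟨-k, -l, k * l - d, -m, ?_⟩
    rw [mul_inv_rev, ((hC k l d).zpow_left m).inv_inv.eq, heisenberg_inv huv hzu hzv, zpow_neg C]

end Heisenberg

section Braid

variable {G : Type*} [Group G] {a b : G}

lemma commute_sq_of_mul_eq_mul {Δ : G} (ha : Δ * a = b * Δ) (hb : Δ * b = a * Δ) :
    Commute (Δ ^ 2) a := by
  rw [Commute, SemiconjBy, sq, mul_assoc, ha, ← mul_assoc, hb, mul_assoc]

lemma braid_mul_left (h : a * b * a = b * a * b) : a * b * a * a = b * (a * b * a) := by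
  nth_rewrite 1 [h]; group

lemma braid_mul_right (h : a * b * a = b * a * b) : a * b * a * b = a * (a * b * a) := by
  nth_rewrite 2 [h]; group

lemma sq_mul_conj_sq_mul_sq (h : a * b * a = b * a * b) :
    a ^ 2 * (b * a ^ 2 * b⁻¹) * b ^ 2 = (a * b * a) ^ 2 :=
  calc a ^ 2 * (b * a ^ 2 * b⁻¹) * b ^ 2 = a * (a * b * a) * (a * b) := by simp only [sq]; group
    _ = a * (b * a * b) * (a * b) := by rw [h]
    _ = a * b * a * (b * a * b) := by group
    _ = (a * b * a) ^ 2 := by rw [← h, sq]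

end Braid

/-- The truncated polynomial ring `ℤ[ε]/(ε³)`; `⟨a, b, c⟩` stands for `a + b ε + c ε²`. -/
@[ext] structure Jet where
  c0 : ℤ
  c1 : ℤ
  c2 : ℤ
deriving DecidableEq

namespace Jet

instance : Zero Jet := ⟨⟨0, 0, 0⟩⟩
instance : One Jet := ⟨⟨1, 0, 0⟩⟩
instance : Add Jet := ⟨fun x y => ⟨x.c0 + y.c0, x.c1 + y.c1, x.c2 + y.c2⟩⟩
instance : Neg Jet := ⟨fun x => ⟨-x.c0, -x.c1, -x.c2⟩⟩
instance : Mul Jet :=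
  ⟨fun x y => ⟨x.c0 * y.c0, x.c0 * y.c1 + x.c1 * y.c0, x.c0 * y.c2 + x.c1 * y.c1 + x.c2 * y.c0⟩⟩

@[simp] lemma zero_def : (0 : Jet) = ⟨0, 0, 0⟩ := rfl
@[simp] lemma one_def : (1 : Jet) = ⟨1, 0, 0⟩ := rfl
@[simp] lemma add_def (x y : Jet) : x + y = ⟨x.c0 + y.c0, x.c1 + y.c1, x.c2 + y.c2⟩ := rfl
@[simp] lemma neg_def (x : Jet) : -x = ⟨-x.c0, -x.c1, -x.c2⟩ := rfl
@[simp] lemma mul_def (x y : Jet) :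
    x * y = ⟨x.c0 * y.c0, x.c0 * y.c1 + x.c1 * y.c0, x.c0 * y.c2 + x.c1 * y.c1 + x.c2 * y.c0⟩ :=
  rfl

instance : CommRing Jet where
  add_assoc := by intros; ext <;> simp <;> ring
  zero_add := by intros; ext <;> simp
  add_zero := by intros; ext <;> simp
  add_comm := by intros; ext <;> simp <;> ring
  left_distrib := by intros; ext <;> simp <;> ring
  right_distrib := by intros; ext <;> simp <;> ring
  zero_mul := by intros; ext <;> simp
  mul_zero := by intros; ext <;> simp
  mul_assoc := by intros; ext <;> simp <;> ring
  one_mul := by intros; ext <;> simp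
  mul_one := by intros; ext <;> simp
  neg_add_cancel := by intros; ext <;> simp
  mul_comm := by intros; ext <;> simp <;> ring
  nsmul := nsmulRec
  zsmul := zsmulRec

def eps : Ideal Jet where
  carrier := {x | x.c0 = 0}
  zero_mem' := rfl
  add_mem' {x y} hx hy := by simp_all
  smul_mem' c x hx := by simp_all

def epsSq : Ideal Jet where
  carrier := {x | x.c0 = 0 ∧ x.c1 = 0}
  zero_mem' := ⟨rfl, rfl⟩
  add_mem' {x y} hx hy := by simp_all
  smul_mem' c x hx := by simp_all

lemma mem_eps {x : Jet} : x ∈ eps ↔ x.c0 = 0 := Iff.rfl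
lemma mem_epsSq {x : Jet} : x ∈ epsSq ↔ x.c0 = 0 ∧ x.c1 = 0 := Iff.rfl

lemma epsSq_le_eps : epsSq ≤ eps := fun _ hx => hx.1

lemma mul_mem_epsSq {x y : Jet} (hx : x ∈ eps) (hy : y ∈ eps) : x * y ∈ epsSq := by
  simp_all [mem_eps, mem_epsSq]

lemma mul_eq_zero_of_mem_epsSq {x y : Jet} (hx : x ∈ epsSq) (hy : y ∈ eps) : x * y = 0 := by
  simp_all [mem_eps, mem_epsSq]

def c1Hom : Jet →+ ℤ := ⟨⟨c1, rfl⟩, fun _ _ => rfl⟩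
def c2Hom : Jet →+ ℤ := ⟨⟨c2, rfl⟩, fun _ _ => rfl⟩

end Jet

abbrev JetMat := Matrix (Fin 3) (Fin 3) Jet

lemma mul_mem_epsSq_matrix {M N : JetMat} (hM : M ∈ Jet.eps.matrix (Fin 3))
    (hN : N ∈ Jet.eps.matrix (Fin 3)) : M * N ∈ Jet.epsSq.matrix (Fin 3) :=
  Ideal.mul_mem_matrix (fun _ hx _ hy => Jet.mul_mem_epsSq hx hy) hM hN

lemma mul_eq_zero_of_mem_epsSq_matrix {M N : JetMat} (hM : M ∈ Jet.epsSq.matrix (Fin 3))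
    (hN : N ∈ Jet.eps.matrix (Fin 3)) : M * N = 0 := by
  have := Ideal.mul_mem_matrix (K := ⊥)
    (fun _ hx _ hy => Ideal.mem_bot.2 (Jet.mul_eq_zero_of_mem_epsSq hx hy)) hM hN
  rwa [Ideal.matrix_bot, Ideal.mem_bot] at this

abbrev Γ₁ : Subgroup JetMatˣ := congrSubgroup (Jet.eps.matrix (Fin 3))
abbrev Γ₂ : Subgroup JetMatˣ := congrSubgroup (Jet.epsSq.matrix (Fin 3))

lemma mem_Γ₁_iff {u : JetMatˣ} : u ∈ Γ₁ ↔ ∀ i j, (((u : JetMat) - 1) i j).c0 = 0 := Iff.rfl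

lemma mem_Γ₂_iff {u : JetMatˣ} :
    u ∈ Γ₂ ↔ ∀ i j, (((u : JetMat) - 1) i j).c0 = 0 ∧ (((u : JetMat) - 1) i j).c1 = 0 := Iff.rfl

lemma Γ₂_le_Γ₁ : Γ₂ ≤ Γ₁ := fun _ hu i j => Jet.epsSq_le_eps (hu i j)

lemma commute_conj_of_mem_Γ₁ {x w : JetMatˣ} (hx : x ∈ Γ₁) (hw : w ∈ Γ₁) :
    Commute x (w⁻¹ * x * w) :=
  commute_conj_of_mem_congrSubgroup
    (fun _ ha _ hb _ hc => mul_eq_zero_of_mem_epsSq_matrix (mul_mem_epsSq_matrix ha hb) hc) hx hw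

def linHom : Γ₁ →* Multiplicative (Matrix (Fin 3) (Fin 3) ℤ) :=
  congrSubgroupHom _ Jet.c1Hom.mapMatrix fun _ ha _ hb => by
    ext i j; exact (mul_mem_epsSq_matrix ha hb i j).2

def quadHom : Γ₂ →* Multiplicative (Matrix (Fin 3) (Fin 3) ℤ) :=
  congrSubgroupHom _ Jet.c2Hom.mapMatrix fun _ ha _ hb => by
    rw [mul_eq_zero_of_mem_epsSq_matrix ha (Jet.epsSq.matrix_monotone _ Jet.epsSq_le_eps hb),
      map_zero]

lemma linHom_apply (u : Γ₁) :
    (linHom u).toAdd = Jet.c1Hom.mapMatrix (((u : JetMatˣ) : JetMat) - 1) := rfl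

lemma quadHom_apply (u : Γ₂) :
    (quadHom u).toAdd = Jet.c2Hom.mapMatrix (((u : JetMatˣ) : JetMat) - 1) := rfl

lemma linHom_eq_one_iff {u : Γ₁} : linHom u = 1 ↔ (u : JetMatˣ) ∈ Γ₂ := by
  rw [← toAdd_eq_zero, linHom_apply]
  exact ⟨fun h i j => ⟨u.2 i j, congrFun₂ h i j⟩, fun h => by ext i j; exact (h i j).2⟩

lemma linHom_inclusion (u : Γ₂) : linHom (Subgroup.inclusion Γ₂_le_Γ₁ u) = 1 :=
  linHom_eq_one_iff.2 u.2

lemma Γ₁.eq_one_of_pow_eq_one {u : Γ₁} {n : ℕ} (hn : n ≠ 0) (h : u ^ n = 1) : u = 1 := by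
  have hu₂ : (u : JetMatˣ) ∈ Γ₂ :=
    linHom_eq_one_iff.1 <| (pow_eq_one_iff_left hn).1 (by rw [← map_pow, h, map_one])
  have hquad : quadHom ⟨u, hu₂⟩ = 1 := by
    refine (pow_eq_one_iff_left hn).1 ?_
    rw [← map_pow]
    convert map_one quadHom
    exact Subtype.ext (by simpa using congrArg Subtype.val h)
  have hzero : ((u : JetMatˣ) : JetMat) - 1 = 0 := by
    ext i j
    · exact (hu₂ i j).1
    · exact (hu₂ i j).2
    · exact congrFun₂ (congrArg Multiplicative.toAdd hquad) i j
  exact Subtype.ext (Units.ext (sub_eq_zero.1 hzero))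

/-- The unreduced Burau matrices `σᵢ ↦ [[1 - t, t], [1, 0]]` at `t = 1 + ε`. -/
def burau1 : JetMatˣ :=
  ⟨!![⟨0, -1, 0⟩, ⟨1, 1, 0⟩, 0; 1, 0, 0; 0, 0, 1],
    !![0, 1, 0; ⟨1, -1, 1⟩, ⟨0, 1, -1⟩, 0; 0, 0, 1], by decide, by decide⟩

def burau2 : JetMatˣ :=
  ⟨!![1, 0, 0; 0, ⟨0, -1, 0⟩, ⟨1, 1, 0⟩; 0, 1, 0],
    !![1, 0, 0; 0, 0, 1; 0, ⟨1, -1, 1⟩, ⟨0, 1, -1⟩], by decide, by decide⟩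

def burau : B3 →* JetMatˣ :=
  PresentedGroup.toGroup (f := ![burau1, burau2]) <| by
    rintro _ rfl
    have : burau1 * burau2 * burau1 = burau2 * burau1 * burau2 := Units.ext (by decide)
    simp only [map_mul, map_inv, FreeGroup.lift_apply_of, Matrix.cons_val_zero,
      Matrix.cons_val_one, mul_inv_eq_one]
    exact this

@[simp] lemma burau_s1 : burau s1 = burau1 := PresentedGroup.toGroup.of _
@[simp] lemma burau_s2 : burau s2 = burau2 := PresentedGroup.toGroup.of _

lemma burau_a12_mem : burau a12 ∈ Γ₁ := by
  simp only [a12, map_pow, burau_s1]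
  rw [mem_Γ₁_iff]
  decide

lemma burau_a13_mem : burau a13 ∈ Γ₁ := by
  simp only [a13, map_mul, map_pow, map_inv, burau_s1, burau_s2]
  rw [mem_Γ₁_iff]
  decide

lemma burau_a23_mem : burau a23 ∈ Γ₁ := by
  simp only [a23, map_pow, burau_s2]
  rw [mem_Γ₁_iff]
  decide

lemma burau_pcomm_a23_a13_mem : burau (pcomm a23 a13) ∈ Γ₂ := by
  simp only [pcomm, a13, a23, map_mul, map_pow, map_inv, burau_s1, burau_s2]
  rw [mem_Γ₂_iff]
  decide

def burauA12 : Γ₁ := ⟨burau a12, burau_a12_mem⟩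
def burauA13 : Γ₁ := ⟨burau a13, burau_a13_mem⟩
def burauA23 : Γ₁ := ⟨burau a23, burau_a23_mem⟩
def burauZ : Γ₂ := ⟨burau (pcomm a23 a13), burau_pcomm_a23_a13_mem⟩

lemma linHom_burauA12 : (linHom burauA12).toAdd = !![1, -1, 0; -1, 1, 0; 0, 0, 0] := by
  rw [linHom_apply]
  simp only [burauA12, a12, map_pow, burau_s1]
  decide

lemma linHom_burauA13 : (linHom burauA13).toAdd = !![1, 0, -1; 0, 0, 0; -1, 0, 1] := by
  rw [linHom_apply]
  simp only [burauA13, a13, map_mul, map_pow, map_inv, burau_s1, burau_s2]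
  decide

lemma linHom_burauA23 : (linHom burauA23).toAdd = !![0, 0, 0; 0, 1, -1; 0, -1, 1] := by
  rw [linHom_apply]
  simp only [burauA23, a23, map_pow, burau_s2]
  decide

lemma quadHom_burauZ : (quadHom burauZ).toAdd = !![0, -1, 1; 1, 0, -1; -1, 1, 0] := by
  rw [quadHom_apply]
  simp only [burauZ, pcomm, a13, a23, map_mul, map_pow, map_inv, burau_s1, burau_s2]
  decide

lemma burau_mem_Γ₁_of_mem_closure {g : B3} (hg : g ∈ Subgroup.closure {a13, a23}) :
    burau g ∈ Γ₁ := by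
  suffices Subgroup.closure {a13, a23} ≤ Γ₁.comap burau from this hg
  rw [Subgroup.closure_le]
  rintro _ (rfl | rfl)
  exacts [burau_a13_mem, burau_a23_mem]

lemma normalClosure_homotopyRels3_le_ker_burau :
    Subgroup.normalClosure homotopyRels3 ≤ burau.ker := by
  refine Subgroup.normalClosure_le_normal ?_
  rintro _ ⟨g, hg, rfl | rfl⟩ <;>
    rw [SetLike.mem_coe, MonoidHom.mem_ker, map_pcomm, pcomm_eq_one_iff, map_mul, map_mul, map_inv]
  exacts [commute_conj_of_mem_Γ₁ burau_a13_mem (burau_mem_Γ₁_of_mem_closure hg),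
    commute_conj_of_mem_Γ₁ burau_a23_mem (burau_mem_Γ₁_of_mem_closure hg)]

def burauHat : HB3 →* JetMatˣ := QuotientGroup.lift _ burau normalClosure_homotopyRels3_le_ker_burau

lemma burauHat_mem_Γ₁ {g : HB3} (hg : g ∈ Subgroup.closure {b12, b13, b23}) :
    burauHat g ∈ Γ₁ := by
  suffices Subgroup.closure {b12, b13, b23} ≤ Γ₁.comap burauHat from this hg
  rw [Subgroup.closure_le]
  rintro _ (rfl | rfl | rfl)
  exacts [burau_a12_mem, burau_a13_mem, burau_a23_mem]

lemma braid_rel : s1 * s2 * s1 = s2 * s1 * s2 := by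
  have h : PresentedGroup.mk braidRel3 (FreeGroup.of 0 * FreeGroup.of 1 * FreeGroup.of 0 *
      (FreeGroup.of 1 * FreeGroup.of 0 * FreeGroup.of 1)⁻¹) = 1 :=
    (QuotientGroup.eq_one_iff _).2 (Subgroup.subset_normalClosure rfl)
  rwa [map_mul, map_inv, mul_inv_eq_one] at h

lemma delta_sq_mem_center : (s1 * s2 * s1) ^ 2 ∈ Subgroup.center B3 := by
  rw [← Subgroup.centralizer_univ, ← Subgroup.coe_top, ← PresentedGroup.closure_range_of,
    Subgroup.centralizer_closure, Subgroup.mem_centralizer_iff]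
  rintro _ ⟨i, rfl⟩
  fin_cases i
  exacts [(commute_sq_of_mul_eq_mul (braid_mul_left braid_rel) (braid_mul_right braid_rel)).eq.symm,
    (commute_sq_of_mul_eq_mul (braid_mul_right braid_rel) (braid_mul_left braid_rel)).eq.symm]

lemma commute_b12_mul_b13_mul_b23 (y : B3) : Commute (b12 * b13 * b23) (pr y) := by
  rw [b12, b13, b23, ← map_mul, ← map_mul, a12, a13, a23, sq_mul_conj_sq_mul_sq braid_rel]
  exact Commute.map (Subgroup.mem_center_iff.1 delta_sq_mem_center y).symm pr

lemma pr_eq_one_of_mem_homotopyRels3 {x : B3} (hx : x ∈ homotopyRels3) : pr x = 1 :=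
  (QuotientGroup.eq_one_iff _).2 (Subgroup.subset_normalClosure hx)

lemma commute_b13_conj_b23 : Commute b13 (b23⁻¹ * b13 * b23) := by
  have := pr_eq_one_of_mem_homotopyRels3 ⟨a23, Subgroup.subset_closure (by simp), Or.inl rfl⟩
  rwa [map_pcomm, pcomm_eq_one_iff, map_mul, map_mul, map_inv] at this

lemma commute_b23_conj_b13 : Commute b23 (b13⁻¹ * b23 * b13) := by
  have := pr_eq_one_of_mem_homotopyRels3 ⟨a13, Subgroup.subset_closure (by simp), Or.inr rfl⟩
  rwa [map_pcomm, pcomm_eq_one_iff, map_mul, map_mul, map_inv] at this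

lemma b23_mul_b13 : b23 * b13 = b13 * b23 * zz := by
  rw [zz, pcomm]; group

lemma commute_zz_b13 : Commute zz b13 := by
  have : zz = (b23⁻¹ * b13 * b23)⁻¹ * b13 := by rw [zz, pcomm]; group
  rw [this]
  exact commute_b13_conj_b23.symm.inv_left.mul_left (Commute.refl b13)

lemma commute_zz_b23 : Commute zz b23 := by
  have : zz = b23⁻¹ * (b13⁻¹ * b23 * b13) := by rw [zz, pcomm]; group
  rw [this]
  exact (Commute.refl b23).inv_left.mul_left commute_b23_conj_b13.symm

lemma zz_eq_pr : zz = pr (pcomm a23 a13) := by rw [map_pcomm]; rfl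

lemma exists_eq_normalForm {g : HB3} (hg : g ∈ Subgroup.closure {b12, b13, b23}) :
    ∃ k l d m : ℤ, g = b13 ^ k * b23 ^ l * zz ^ d * (b12 * b13 * b23) ^ m := by
  have hle : Subgroup.closure {b12, b13, b23} ≤ Subgroup.closure {b13, b23, b12 * b13 * b23} := by
    rw [Subgroup.closure_le]
    rintro _ (rfl | rfl | rfl)
    · rw [show b12 = b12 * b13 * b23 * b23⁻¹ * b13⁻¹ by group]
      refine mul_mem (mul_mem ?_ (inv_mem ?_)) (inv_mem ?_) <;>
        exact Subgroup.subset_closure (by simp)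
    all_goals exact Subgroup.subset_closure (by simp)
  exact exists_eq_heisenberg_mul_zpow_of_mem_closure b23_mul_b13 commute_zz_b13 commute_zz_b23
    (commute_b12_mul_b13_mul_b23 a13) (commute_b12_mul_b13_mul_b23 a23)
    (zz_eq_pr ▸ commute_b12_mul_b13_mul_b23 _) (hle hg)

lemma eq_zero_of_burauHat_normalForm_eq_one {k l d m : ℤ}
    (h : burauHat (b13 ^ k * b23 ^ l * zz ^ d * (b12 * b13 * b23) ^ m) = 1) :
    k = 0 ∧ l = 0 ∧ d = 0 ∧ m = 0 := by
  have hY : burauA13 ^ k * burauA23 ^ l * Subgroup.inclusion Γ₂_le_Γ₁ burauZ ^ d *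
      (burauA12 * burauA13 * burauA23) ^ m = 1 := by
    rw [zz_eq_pr, map_mul, map_mul, map_mul, map_zpow, map_zpow, map_zpow, map_zpow, map_mul,
      map_mul] at h
    ext1
    exact h
  have hlin := congrArg (fun y => (linHom y).toAdd) hY
  simp only [map_mul, map_zpow, toAdd_mul, toAdd_zpow, linHom_burauA12, linHom_burauA13,
    linHom_burauA23, linHom_inclusion, map_one, toAdd_one] at hlin
  obtain rfl : m = 0 := by simpa using congrFun₂ hlin 0 1
  obtain rfl : k = 0 := by simpa using congrFun₂ hlin 0 0
  obtain rfl : l = 0 := by simpa using congrFun₂ hlin 1 1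
  have hquad := congrArg (fun y => (quadHom y).toAdd) (show burauZ ^ d = 1 by
    ext1
    simpa using congrArg Subtype.val hY)
  simp only [map_zpow, toAdd_zpow, quadHom_burauZ, map_one, toAdd_one] at hquad
  exact ⟨rfl, rfl, by simpa using congrFun₂ hquad 1 0, rfl⟩

/-- The pure homotopy braid group `P̂₃ = ⟨b₁₂, b₁₃, b₂₃⟩ ≤ B̂₃` is torsion-free. -/
theorem pure_homotopy_braid_group_torsion_free
    (g : HB3) (hg : g ∈ Subgroup.closure ({b12, b13, b23} : Set HB3))
    (n : ℕ) (hn : 1 ≤ n) (h : g ^ n = 1) : g = 1 := by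
  have hΓ : (⟨burauHat g, burauHat_mem_Γ₁ hg⟩ : Γ₁) = 1 :=
    Γ₁.eq_one_of_pow_eq_one (n := n) (by omega) (Subtype.ext (by simp [← map_pow, h]))
  obtain ⟨k, l, d, m, rfl⟩ := exists_eq_normalForm hg
  obtain ⟨rfl, rfl, rfl, rfl⟩ := eq_zero_of_burauHat_normalForm_eq_one (congrArg Subtype.val hΓ)
  simp
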